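/- arXiv:2506.22196 — 4 statements merged into one kernel-verified Lean document; each statement's English description precedes it below -/
import Mathlib

section
/- For every λ-theory L satisfying β-equality, the endomorphism theory E(L) of the theory presheaf L, viewed as a reflexive object in the category Pshf L of L-presheaves, is isomorphic, as a λ-theory, to L; the isomorphism φ_n : Pshf L(L^n, L) → L_n sends f to f_n(x₁,…,x_n), with inverse sending s ∈ L_n to (t₁,…,t_n) ↦ s • (t₁,…,t_n). Hence the endomorphism-theory assignment E has a right inverse given by Hyland's construction. -/
/-- An (untyped) λ-theory satisfying β-equality (Def. 2.1/2.4 of the paper):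
an algebraic theory `T` with abstraction `abs` (written `λₙ` in the paper) and
application-transpose `rho` (written `ρₙ`), compatible with substitution, and
satisfying β-equality `ρₙ ∘ λₙ = id`. -/
structure LamTh where
  T : ℕ → Type
  xv : ∀ n, Fin n → T n
  subst : ∀ {m n}, T m → (Fin m → T n) → T n
  subst_xv : ∀ {m n} (j : Fin m) (g : Fin m → T n), subst (xv m j) g = g j
  subst_id : ∀ {m} (f : T m), subst f (xv m) = f
  subst_assoc : ∀ {l m n} (f : T l) (g : Fin l → T m) (h : Fin m → T n),
      subst (subst f g) h = subst f fun i => subst (g i) h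
  abs : ∀ {n}, T (n + 1) → T n
  rho : ∀ {n}, T n → T (n + 1)
  abs_subst : ∀ {m n} (f : T (m + 1)) (h : Fin m → T n),
      subst (abs f) h =
        abs (subst f (Fin.snoc (fun i => subst (h i) fun j => xv (n + 1) j.castSucc)
          (xv (n + 1) (Fin.last n))))
  rho_subst : ∀ {m n} (g : T m) (h : Fin m → T n),
      rho (subst g h) =
        subst (rho g) (Fin.snoc (fun i => subst (h i) fun j => xv (n + 1) j.castSucc)
          (xv (n + 1) (Fin.last n)))
  beta : ∀ {n} (f : T (n + 1)), rho (abs f) = f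

namespace LamTh

variable (L : LamTh)

/-- Weakening `ι_{n,1} : T n → T (n+1)`. -/
def wk {n : ℕ} (f : L.T n) : L.T (n + 1) :=
  L.subst f fun j => L.xv (n + 1) j.castSucc

/-- Weakening of a constant `ι_{0,n} : T 0 → T n`. -/
def wk0 {n : ℕ} (a : L.T 0) : L.T n :=
  L.subst a Fin.elim0

/-- Application `f g := ρ(x_{1,1}) • (f, g)` (Def. 2.12/Rem. 2.13). -/
def appT {n : ℕ} (f g : L.T n) : L.T n :=
  L.subst (L.rho (L.xv 1 0)) ![f, g]

/-- Composition of terms, `a ∘ b := λ x. a (b x)`. -/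
def compT {n : ℕ} (f g : L.T n) : L.T n :=
  L.abs (L.appT (L.wk f) (L.appT (L.wk g) (L.xv (n + 1) (Fin.last n))))

/-- `a ∘ b` for constants. -/
def comp (a b : L.T 0) : L.T 0 := L.compT a b

/-- Pairing `(s, t) := λ x. x s t`. -/
def pairT {n : ℕ} (s t : L.T n) : L.T n :=
  L.abs (L.appT (L.appT (L.xv (n + 1) (Fin.last n)) (L.wk s)) (L.wk t))

/-- Pairing of morphisms, `⟨f, g⟩ := λ x. (f x, g x)`. -/
def pairMor (f g : L.T 0) : L.T 0 :=
  L.abs (L.pairT (L.appT (L.wk f) (L.xv 1 0)) (L.appT (L.wk g) (L.xv 1 0)))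

/-- First projection `π₁ = λ x₁. x₁ (λ x₂ x₃. x₂)`. -/
def pi1 : L.T 0 := L.abs (L.appT (L.xv 1 0) (L.abs (L.abs (L.xv 3 1))))

/-- Second projection `π₂ = λ x₁. x₁ (λ x₂ x₃. x₃)`. -/
def pi2 : L.T 0 := L.abs (L.appT (L.xv 1 0) (L.abs (L.abs (L.xv 3 2))))

/-- The reflexive object `U = λ x₁. x₁` of the category of retracts. -/
def UU : L.T 0 := L.abs (L.xv 1 0)

/-- The terminal object `I = λ x₁ x₂. x₂`. -/
def Iterm : L.T 0 := L.abs (L.abs (L.xv 2 1))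

/-- `f` is a morphism `A → B` in the category of retracts `R`:
`B ∘ f = f = f ∘ A`. -/
def IsRMor (A B f : L.T 0) : Prop := L.comp B f = f ∧ L.comp f A = f

/-- `A` is an object of the category of retracts `R`: `A ∘ A = A`. -/
def IsRObj (A : L.T 0) : Prop := L.comp A A = A

/-- `π_{n,i} = π₂ ∘ π₁^{n-i}` (with `i` 0-indexed here, so `π₂ ∘ π₁^{n-1-i}`). -/
def piProj (n : ℕ) (i : Fin n) : L.T 0 :=
  (fun t => L.comp t L.pi1)^[n - 1 - (i : ℕ)] L.pi2

/-- `⟨a₁, …, aₙ⟩ = ⟨⟨…⟨⟨λx.x, a₁⟩, a₂⟩…⟩, aₙ⟩`, the tupling of morphisms. -/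
def tupleMor : ∀ {n : ℕ}, (Fin n → L.T 0) → L.T 0
  | 0, _ => L.UU
  | n + 1, g => L.pairMor (tupleMor fun i => g i.castSucc) (g (Fin.last n))

/-- The `n`-fold product `Uⁿ = ⟨π_{n,i}⟩ᵢ` of `U` in `R`. -/
def Upow (n : ℕ) : L.T 0 := L.tupleMor fun i : Fin n => L.piProj n i

/-- The binary product object `A₁ × A₂ = ⟨A₁ ∘ π₁, A₂ ∘ π₂⟩` in `R`. -/
def prodObj (A₁ A₂ : L.T 0) : L.T 0 :=
  L.pairMor (L.comp A₁ L.pi1) (L.comp A₂ L.pi2)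

/-- The exponential object `C^B = λ x₁. C ∘ x₁ ∘ B` in `R`. -/
def expObj (B C : L.T 0) : L.T 0 :=
  L.abs (L.compT (L.compT (L.wk0 C) (L.xv 1 0)) (L.wk0 B))

end LamTh

namespace LamTh

variable (L : LamTh)

/-- A family `f` is a morphism of `L`-presheaves `Lⁿ → L`, where `L` is the
theory presheaf (whose action is substitution) and `Lⁿ` its `n`-fold product
(computed pointwise): `f` commutes with the actions. -/
def IsPshHom (n : ℕ) (f : ∀ m, (Fin n → L.T m) → L.T m) : Prop :=
  ∀ (m k : ℕ) (t : Fin n → L.T m) (s : Fin m → L.T k),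
    f k (fun i => L.subst (t i) s) = L.subst (f m t) s

/-- The `i`-th variable of the endomorphism theory `E(L)`: the `i`-th product
projection `Lⁿ → L`. -/
def endoPVar (n : ℕ) (i : Fin n) : ∀ m, (Fin n → L.T m) → L.T m :=
  fun _ t => t i

/-- Substitution of the endomorphism theory `E(L)`: `f • g = f ∘ ⟨g₁,…,g_k⟩`. -/
def endoPSubst {k n : ℕ} (f : ∀ m, (Fin k → L.T m) → L.T m)
    (g : Fin k → ∀ m, (Fin n → L.T m) → L.T m) : ∀ m, (Fin n → L.T m) → L.T m :=
  fun m t => f m fun i => g i m t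

/-- Abstraction of the endomorphism theory `E(L)`: `λ(f) = abs ∘ φ_{Lⁿ}(f)`,
where `φ` is the exponential transpose given by the exponential
`L^L = A(L)`, `A(L)_m = L_{m+1}`. -/
def endoPAbs {n : ℕ} (f : ∀ m, (Fin (n + 1) → L.T m) → L.T m) :
    ∀ m, (Fin n → L.T m) → L.T m :=
  fun m t => L.abs (f (m + 1)
    (Fin.snoc (fun i => L.wk (t i)) (L.xv (m + 1) (Fin.last m))))

/-- Application of the endomorphism theory `E(L)`: `ρ(g) = φ⁻¹_{Lⁿ}(app ∘ g)`. -/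
def endoPRho {n : ℕ} (g : ∀ m, (Fin n → L.T m) → L.T m) :
    ∀ m, (Fin (n + 1) → L.T m) → L.T m :=
  fun m t => L.subst (L.rho (g m fun i => t i.castSucc))
    (Fin.snoc (L.xv m) (t (Fin.last n)))

/-- `φₙ(f) = fₙ(x₁,…,xₙ)`. -/
def phiH (n : ℕ) (f : ∀ m, (Fin n → L.T m) → L.T m) : L.T n :=
  f n (L.xv n)

end LamTh

namespace LamTh

variable (L : LamTh)

lemma snoc_xv (n : ℕ) :
    (Fin.snoc (fun i : Fin n => L.xv (n + 1) i.castSucc) (L.xv (n + 1) (Fin.last n))) =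
      L.xv (n + 1) := by
  funext j
  refine Fin.lastCases ?_ ?_ j <;> simp

lemma hom_eq {n : ℕ} {f : ∀ m, (Fin n → L.T m) → L.T m} (hf : L.IsPshHom n f)
    (m : ℕ) (t : Fin n → L.T m) : f m t = L.subst (f n (L.xv n)) t := by
  have := hf n m (L.xv n) t
  simpa [L.subst_xv] using this

lemma subst_hom {n : ℕ} (s : L.T n) : L.IsPshHom n (fun m t => L.subst s t) := by
  intro m k t u
  rw [L.subst_assoc]

lemma subst_wk_snoc {n m : ℕ} (a : L.T n) (s : Fin n → L.T m) (b : L.T m) :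
    L.subst (L.wk a) (Fin.snoc s b) = L.subst a s := by
  rw [wk, L.subst_assoc]
  congr 1
  funext j
  simp [L.subst_xv]

end LamTh

/-- Scott's Representation Theorem, Hyland's construction.
For every λ-theory `L` satisfying β-equality, the endomorphism theory `E(L)`
of the theory presheaf `L`, viewed as a reflexive object in the category
`Pshf L` of `L`-presheaves (so `E(L)ₙ = Pshf L(Lⁿ, L)`, with variables the
product projections, substitution `f • g = f ∘ ⟨gᵢ⟩ᵢ`, abstraction
`λ(f) = abs ∘ φ(f)` and application `ρ(g) = φ⁻¹(app ∘ g)` for the exponential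
`L^L = A(L)`), is isomorphic, as a λ-theory, to `L`; the isomorphism
`φₙ : Pshf L(Lⁿ, L) → Lₙ` sends `f` to `fₙ(x₁,…,xₙ)`, with inverse sending
`s : Lₙ` to `(t₁,…,tₙ) ↦ s • (t₁,…,tₙ)`.  Hence the endomorphism-theory
assignment `E` has a right inverse, given by Hyland's construction. -/
theorem hyland_representation_theorem (L : LamTh) :
    -- `φₙ` is a bijection `Pshf L(Lⁿ, L) ≃ Lₙ`, with the stated inverse
    (∀ n : ℕ, ∃ e : {f : ∀ m, (Fin n → L.T m) → L.T m // L.IsPshHom n f} ≃ L.T n,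
      (∀ f, e f = L.phiH n f.1) ∧
        ∀ (s : L.T n) (m : ℕ) (t : Fin n → L.T m), (e.symm s).1 m t = L.subst s t) ∧
    -- `φ` sends the product projections (the variables of `E(L)`) to variables
    (∀ (n : ℕ) (i : Fin n),
      L.IsPshHom n (L.endoPVar n i) ∧ L.phiH n (L.endoPVar n i) = L.xv n i) ∧
    -- `φ` commutes with substitution
    (∀ (k n : ℕ) (f : ∀ m, (Fin k → L.T m) → L.T m)
        (g : Fin k → ∀ m, (Fin n → L.T m) → L.T m),
      L.IsPshHom k f → (∀ i, L.IsPshHom n (g i)) →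
      L.IsPshHom n (L.endoPSubst f g) ∧
        L.phiH n (L.endoPSubst f g) = L.subst (L.phiH k f) fun i => L.phiH n (g i)) ∧
    -- `φ` commutes with abstraction
    (∀ (n : ℕ) (f : ∀ m, (Fin (n + 1) → L.T m) → L.T m), L.IsPshHom (n + 1) f →
      L.IsPshHom n (L.endoPAbs f) ∧ L.phiH n (L.endoPAbs f) = L.abs (L.phiH (n + 1) f)) ∧
    -- `φ` commutes with application
    (∀ (n : ℕ) (g : ∀ m, (Fin n → L.T m) → L.T m), L.IsPshHom n g →
      L.IsPshHom (n + 1) (L.endoPRho g) ∧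
        L.phiH (n + 1) (L.endoPRho g) = L.rho (L.phiH n g)) := by
  refine ⟨?_, ?_, ?_, ?_, ?_⟩
  · -- bijection
    intro n
    refine ⟨{ toFun := fun f => L.phiH n f.1
              invFun := fun s => ⟨fun m t => L.subst s t, L.subst_hom s⟩
              left_inv := ?_
              right_inv := fun s => L.subst_id s },
            fun f => rfl, fun s m t => rfl⟩
    intro f
    apply Subtype.ext
    funext m t
    exact (L.hom_eq f.2 m t).symm
  · -- variables
    intro n i
    exact ⟨fun m k t s => rfl, rfl⟩
  · -- substitution
    intro k n f g hf hg
    constructor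
    · intro m l t s
      show f l (fun i => g i l fun j => L.subst (t j) s) = _
      have h1 : (fun i => g i l fun j => L.subst (t j) s)
          = fun i => L.subst (g i m t) s := by
        funext i; exact hg i m l t s
      rw [h1]
      exact hf m l (fun i => g i m t) s
    · show f n (fun i => g i n (L.xv n)) = _
      rw [L.hom_eq hf n (fun i => g i n (L.xv n))]
      rfl
  · -- abstraction
    intro n f hf
    constructor
    · intro m k t s
      show L.abs (f (k + 1) _) = L.subst (L.abs (f (m + 1) _)) s
      rw [L.abs_subst, L.hom_eq hf (m + 1), L.hom_eq hf (k + 1), L.subst_assoc]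
      refine congrArg L.abs (congrArg (L.subst _) (funext fun j => ?_))
      refine Fin.lastCases ?_ ?_ j
      · simp [L.subst_xv]
      · intro i
        simp only [Fin.snoc_castSucc]
        rw [L.subst_wk_snoc]
        simp only [LamTh.wk, L.subst_assoc]
    · show L.abs (f (n + 1) _) = _
      refine congrArg L.abs ?_
      show f (n + 1)
          (Fin.snoc (fun i => L.wk (L.xv n i)) (L.xv (n + 1) (Fin.last n))) = _
      have : (Fin.snoc (fun i => L.wk (L.xv n i)) (L.xv (n + 1) (Fin.last n)))
          = L.xv (n + 1) := by
        funext i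
        refine Fin.lastCases ?_ ?_ i
        · simp
        · intro i; simp [LamTh.wk, L.subst_xv]
      rw [this]
      rfl
  · -- application
    intro n g hg
    constructor
    · intro m k t s
      show L.subst (L.rho (g k fun i => L.subst (t i.castSucc) s)) _
          = L.subst (L.subst (L.rho (g m fun i => t i.castSucc)) _) s
      rw [hg m k (fun i => t i.castSucc) s, L.rho_subst, L.subst_assoc, L.subst_assoc]
      congr 1
      funext j
      refine Fin.lastCases ?_ ?_ j
      · simp [L.subst_xv]
      · intro i
        rw [Fin.snoc_castSucc, Fin.snoc_castSucc, L.subst_xv]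
        have : L.subst (L.subst (s i) fun j => L.xv (k + 1) j.castSucc)
            (Fin.snoc (L.xv k) (L.subst (t (Fin.last n)) s)) = s i := by
          rw [L.subst_assoc]
          have h2 : (fun j => L.subst (L.xv (k + 1) j.castSucc)
              (Fin.snoc (L.xv k) (L.subst (t (Fin.last n)) s))) = L.xv k := by
            funext l
            rw [L.subst_xv, Fin.snoc_castSucc]
          rw [h2, L.subst_id]
        rw [this]
    · show L.subst (L.rho (g (n + 1) fun i => L.xv (n + 1) i.castSucc)) _ = _
      have h1 : (fun i => L.xv (n + 1) i.castSucc)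
          = fun i => L.subst (L.xv n i) fun j => L.xv (n + 1) j.castSucc := by
        funext i; rw [L.subst_xv]
      rw [h1, hg n (n + 1) (L.xv n) _, L.rho_subst, L.subst_assoc]
      refine Eq.trans (congrArg (L.subst _) (funext fun j => ?_))
        (L.subst_id (L.rho (g n (L.xv n))))
      refine Fin.lastCases ?_ ?_ j
      · simp [L.subst_xv]
      · intro i
        simp [L.subst_xv]
end

section
/- For every λ-theory L satisfying β-equality, the category of retracts R has binary products: for A₁, A₂ ∈ R, the object A₁ × A₂ := ⟨p₁, p₂⟩ with p_i = A_i ∘ π_i is a product of A₁ and A₂, with projections p₁, p₂ and pairing of morphisms given by ⟨f, g⟩ = λx₁.(f x₁, g x₁). -/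
namespace LamTh

variable (L : LamTh)

lemma subst_closed {n : ℕ} (a : L.T 0) (h : Fin 0 → L.T n) :
    L.subst a h = L.wk0 a := by
  unfold wk0; congr 1; funext i; exact i.elim0

lemma subst_wk0 {n m : ℕ} (a : L.T 0) (h : Fin n → L.T m) :
    L.subst (L.wk0 a) h = L.wk0 a := by
  unfold wk0; rw [L.subst_assoc]; exact L.subst_closed a _

lemma app_substL {m n : ℕ} (f g : L.T m) (h : Fin m → L.T n) :
    L.subst (L.appT f g) h = L.appT (L.subst f h) (L.subst g h) := by
  unfold appT
  rw [L.subst_assoc]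
  congr 1
  funext i
  fin_cases i <;> simp

lemma rho_snoc {m n : ℕ} (g : L.T m) (h : Fin m → L.T n) (a : L.T n) :
    L.subst (L.rho g) (Fin.snoc h a) = L.subst (L.rho (L.subst g h)) (Fin.snoc (L.xv n) a) := by
  rw [L.rho_subst, L.subst_assoc]
  congr 1
  funext i
  refine Fin.lastCases ?_ (fun j => ?_) i
  · simp [L.subst_xv]
  · simp [L.subst_assoc, L.subst_xv, L.subst_id]

lemma beta_app {n : ℕ} (t : L.T (n + 1)) (a : L.T n) :
    L.appT (L.abs t) a = L.subst t (Fin.snoc (L.xv n) a) := by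
  unfold appT
  have : (![L.abs t, a] : Fin 2 → L.T n) = Fin.snoc (fun _ => L.abs t) a := by
    funext i; fin_cases i <;> simp [Fin.snoc]
  rw [this, L.rho_snoc, L.subst_xv, L.beta]

lemma wk_snoc {n m : ℕ} (f : L.T n) (h : Fin n → L.T m) (a : L.T m) :
    L.subst (L.wk f) (Fin.snoc h a) = L.subst f h := by
  unfold wk
  rw [L.subst_assoc]
  congr 1
  funext j
  simp [L.subst_xv]

lemma wk0_abs {n : ℕ} (s : L.T 1) :
    (L.wk0 (L.abs s) : L.T n) = L.abs (L.subst s (fun _ => L.xv (n + 1) (Fin.last n))) := by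
  unfold wk0
  rw [L.abs_subst]
  congr 1

lemma appE {n : ℕ} (s : L.T 1) (t : L.T n) :
    L.appT (L.wk0 (L.abs s)) t = L.subst s (fun _ => t) := by
  rw [L.wk0_abs, L.beta_app, L.subst_assoc]
  congr 1
  funext i
  simp [L.subst_xv]

lemma pair_substL {m n : ℕ} (u v : L.T m) (h : Fin m → L.T n) :
    L.subst (L.pairT u v) h = L.pairT (L.subst u h) (L.subst v h) := by
  unfold pairT
  rw [L.abs_subst]
  congr 1
  rw [L.app_substL, L.app_substL, L.subst_xv, Fin.snoc_last, L.wk_snoc, L.wk_snoc]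
  unfold wk
  rw [L.subst_assoc, L.subst_assoc]

lemma pairT_app {n : ℕ} (u v w : L.T n) :
    L.appT (L.pairT u v) w = L.appT (L.appT w u) v := by
  unfold pairT
  rw [L.beta_app, L.app_substL, L.app_substL, L.subst_xv, L.wk_snoc, L.wk_snoc,
    L.subst_id, L.subst_id]
  simp [Fin.snoc]


/-- `K₁ = λ x y. x`. -/
def K1 : L.T 0 := L.abs (L.abs (L.xv 2 0))
/-- `K₂ = λ x y. y`. -/
def K2 : L.T 0 := L.abs (L.abs (L.xv 2 1))

lemma appK1 {n : ℕ} (u v : L.T n) :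
    L.appT (L.appT (L.wk0 L.K1) u) v = u := by
  unfold K1
  rw [L.appE]
  rw [L.abs_subst]
  have h1 : L.subst (L.xv 2 0)
      (Fin.snoc (fun i : Fin 1 => L.subst u fun j => L.xv (n + 1) j.castSucc)
        (L.xv (n + 1) (Fin.last n))) = L.wk u := by
    rw [L.subst_xv]
    have : (0 : Fin 2) = Fin.castSucc 0 := rfl
    rw [this, Fin.snoc_castSucc]
    rfl
  rw [h1, L.beta_app, L.wk_snoc, L.subst_id]

lemma appK2 {n : ℕ} (u v : L.T n) :
    L.appT (L.appT (L.wk0 L.K2) u) v = v := by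
  unfold K2
  rw [L.appE]
  rw [L.abs_subst]
  have h1 : L.subst (L.xv 2 1)
      (Fin.snoc (fun i : Fin 1 => L.subst u fun j => L.xv (n + 1) j.castSucc)
        (L.xv (n + 1) (Fin.last n))) = L.xv (n + 1) (Fin.last n) := by
    rw [L.subst_xv]
    have : (1 : Fin 2) = Fin.last 1 := rfl
    rw [this, Fin.snoc_last]
  rw [h1, L.beta_app, L.subst_xv, Fin.snoc_last]

lemma wk0K1 : (L.wk0 L.K1 : L.T 1) = L.abs (L.abs (L.xv 3 1)) := by
  unfold K1
  rw [L.wk0_abs, L.abs_subst]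
  congr 2
  rw [L.subst_xv]
  have : (0 : Fin 2) = Fin.castSucc 0 := rfl
  rw [this, Fin.snoc_castSucc, L.subst_xv]
  rfl

lemma wk0K2 : (L.wk0 L.K2 : L.T 1) = L.abs (L.abs (L.xv 3 2)) := by
  unfold K2
  rw [L.wk0_abs, L.abs_subst]
  congr 2
  rw [L.subst_xv]
  have : (1 : Fin 2) = Fin.last 1 := rfl
  rw [this, Fin.snoc_last]
  rfl

lemma app_pi1 {n : ℕ} (s : L.T n) :
    L.appT (L.wk0 L.pi1) s = L.appT s (L.wk0 L.K1) := by
  unfold pi1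
  rw [← L.wk0K1, L.appE, L.app_substL, L.subst_xv, L.subst_wk0]

lemma app_pi2 {n : ℕ} (s : L.T n) :
    L.appT (L.wk0 L.pi2) s = L.appT s (L.wk0 L.K2) := by
  unfold pi2
  rw [← L.wk0K2, L.appE, L.app_substL, L.subst_xv, L.subst_wk0]

lemma pi1_pair {n : ℕ} (u v : L.T n) :
    L.appT (L.wk0 L.pi1) (L.pairT u v) = u := by
  rw [L.app_pi1, L.pairT_app, L.appK1]

lemma pi2_pair {n : ℕ} (u v : L.T n) :
    L.appT (L.wk0 L.pi2) (L.pairT u v) = v := by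
  rw [L.app_pi2, L.pairT_app, L.appK2]


lemma wk_eq_wk0 (a : L.T 0) : L.wk a = L.wk0 a := L.subst_closed a _

lemma comp_eq (a b : L.T 0) :
    L.comp a b = L.abs (L.appT (L.wk0 a) (L.appT (L.wk0 b) (L.xv 1 0))) := by
  unfold comp compT
  rw [L.wk_eq_wk0, L.wk_eq_wk0]
  rfl

lemma app_comp {n : ℕ} (a b : L.T 0) (s : L.T n) :
    L.appT (L.wk0 (L.comp a b)) s = L.appT (L.wk0 a) (L.appT (L.wk0 b) s) := by
  rw [L.comp_eq, L.appE, L.app_substL, L.app_substL, L.subst_wk0, L.subst_wk0, L.subst_xv]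

lemma app_pairMor {n : ℕ} (f g : L.T 0) (s : L.T n) :
    L.appT (L.wk0 (L.pairMor f g)) s
      = L.pairT (L.appT (L.wk0 f) s) (L.appT (L.wk0 g) s) := by
  unfold pairMor
  rw [L.wk_eq_wk0, L.wk_eq_wk0, L.appE, L.pair_substL, L.app_substL, L.app_substL,
    L.subst_wk0, L.subst_wk0, L.subst_xv]

lemma app_UU {n : ℕ} (r : L.T n) : L.appT (L.wk0 L.UU) r = r := by
  unfold UU
  rw [L.appE, L.subst_xv]

lemma comp_UU (t : L.T 0) :
    L.comp L.UU t = L.abs (L.appT (L.wk0 t) (L.xv 1 0)) := by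
  rw [L.comp_eq, L.app_UU]

lemma eta_abs (s : L.T 1) : L.comp L.UU (L.abs s) = L.abs s := by
  rw [L.comp_UU, L.appE]
  have : (fun _ : Fin 1 => L.xv 1 0) = L.xv 1 := by
    funext i; fin_cases i; rfl
  rw [this, L.subst_id]

lemma eta_comp (a b : L.T 0) : L.comp L.UU (L.comp a b) = L.comp a b := by
  rw [L.comp_eq a b]; exact L.eta_abs _

lemma comp_assoc (a b d : L.T 0) :
    L.comp (L.comp a b) d = L.comp a (L.comp b d) := by
  rw [L.comp_eq (L.comp a b) d, L.comp_eq a (L.comp b d), L.app_comp, L.app_comp]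

lemma comp_pairMor (f g h : L.T 0) :
    L.comp (L.pairMor f g) h = L.pairMor (L.comp f h) (L.comp g h) := by
  rw [L.comp_eq (L.pairMor f g) h, L.app_pairMor]
  unfold pairMor
  rw [L.wk_eq_wk0 (L.comp f h), L.wk_eq_wk0 (L.comp g h), L.app_comp, L.app_comp]

lemma comp_pi1_pair (f g : L.T 0) :
    L.comp L.pi1 (L.pairMor f g) = L.comp L.UU f := by
  rw [L.comp_eq, L.app_pairMor, L.pi1_pair, L.comp_UU]

lemma comp_pi2_pair (f g : L.T 0) :
    L.comp L.pi2 (L.pairMor f g) = L.comp L.UU g := by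
  rw [L.comp_eq, L.app_pairMor, L.pi2_pair, L.comp_UU]

lemma eta_of_comp {f : L.T 0} {C : L.T 0} (h : L.comp C f = f) :
    L.comp L.UU f = f := by
  conv_lhs => rw [← h]
  rw [L.eta_comp, h]

end LamTh



/-- For every λ-theory `L` satisfying β-equality, the category
of retracts `R` has binary products: for objects `A₁, A₂` of `R`, the object
`A₁ × A₂ := ⟨A₁ ∘ π₁, A₂ ∘ π₂⟩` is a product of `A₁` and `A₂`, with projections
`pᵢ = Aᵢ ∘ πᵢ` and pairing of morphisms given by `⟨f, g⟩ = λ x₁. (f x₁, g x₁)`. -/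
theorem R_has_binary_products (L : LamTh) (A₁ A₂ : L.T 0)
    (h₁ : L.IsRObj A₁) (h₂ : L.IsRObj A₂) :
    -- `A₁ × A₂` is an object of `R`
    L.IsRObj (L.prodObj A₁ A₂) ∧
    -- the projections `pᵢ = Aᵢ ∘ πᵢ` are morphisms `A₁ × A₂ → Aᵢ`
    L.IsRMor (L.prodObj A₁ A₂) A₁ (L.comp A₁ L.pi1) ∧
    L.IsRMor (L.prodObj A₁ A₂) A₂ (L.comp A₂ L.pi2) ∧
    -- the universal property: `⟨f, g⟩` is the unique mediating morphism
    ∀ B f g : L.T 0, L.IsRObj B → L.IsRMor B A₁ f → L.IsRMor B A₂ g →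
      (L.IsRMor B (L.prodObj A₁ A₂) (L.pairMor f g) ∧
        L.comp (L.comp A₁ L.pi1) (L.pairMor f g) = f ∧
        L.comp (L.comp A₂ L.pi2) (L.pairMor f g) = g) ∧
      ∀ h : L.T 0, L.IsRMor B (L.prodObj A₁ A₂) h →
        L.comp (L.comp A₁ L.pi1) h = f → L.comp (L.comp A₂ L.pi2) h = g →
        h = L.pairMor f g := by
  have h₁' : L.comp A₁ A₁ = A₁ := h₁
  have h₂' : L.comp A₂ A₂ = A₂ := h₂
  have hp1A : L.comp A₁ (L.comp A₁ L.pi1) = L.comp A₁ L.pi1 := by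
    rw [← L.comp_assoc, h₁']
  have hp2A : L.comp A₂ (L.comp A₂ L.pi2) = L.comp A₂ L.pi2 := by
    rw [← L.comp_assoc, h₂']
  have key1 : ∀ f g : L.T 0, L.comp A₁ f = f →
      L.comp (L.comp A₁ L.pi1) (L.pairMor f g) = f := by
    intro f g hf
    rw [L.comp_assoc, L.comp_pi1_pair, L.eta_of_comp hf, hf]
  have key2 : ∀ f g : L.T 0, L.comp A₂ g = g →
      L.comp (L.comp A₂ L.pi2) (L.pairMor f g) = g := by
    intro f g hg
    rw [L.comp_assoc, L.comp_pi2_pair, L.eta_of_comp hg, hg]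
  have c1 : L.comp (L.comp A₁ L.pi1) (L.pairMor (L.comp A₁ L.pi1) (L.comp A₂ L.pi2))
      = L.comp A₁ L.pi1 := key1 _ _ hp1A
  have c2 : L.comp (L.comp A₂ L.pi2) (L.pairMor (L.comp A₁ L.pi1) (L.comp A₂ L.pi2))
      = L.comp A₂ L.pi2 := key2 _ _ hp2A
  have hobj : L.comp (L.pairMor (L.comp A₁ L.pi1) (L.comp A₂ L.pi2))
      (L.pairMor (L.comp A₁ L.pi1) (L.comp A₂ L.pi2))
      = L.pairMor (L.comp A₁ L.pi1) (L.comp A₂ L.pi2) := by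
    rw [L.comp_pairMor, c1, c2]
  refine ⟨hobj, ⟨hp1A, c1⟩, ⟨hp2A, c2⟩, ?_⟩
  intro B f g hB hf hg
  have e1 : L.comp (L.comp A₁ L.pi1) (L.pairMor f g) = f := key1 _ _ hf.1
  have e2 : L.comp (L.comp A₂ L.pi2) (L.pairMor f g) = g := key2 _ _ hg.1
  constructor
  · refine ⟨⟨?_, ?_⟩, e1, e2⟩
    · show L.comp (L.pairMor (L.comp A₁ L.pi1) (L.comp A₂ L.pi2)) (L.pairMor f g)
        = L.pairMor f g
      rw [L.comp_pairMor, e1, e2]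
    · show L.comp (L.pairMor f g) B = L.pairMor f g
      rw [L.comp_pairMor, hf.2, hg.2]
  · intro h hm k1 k2
    have hm1 : L.comp (L.pairMor (L.comp A₁ L.pi1) (L.comp A₂ L.pi2)) h = h := hm.1
    calc h = L.comp (L.pairMor (L.comp A₁ L.pi1) (L.comp A₂ L.pi2)) h := hm1.symm
      _ = L.pairMor (L.comp (L.comp A₁ L.pi1) h) (L.comp (L.comp A₂ L.pi2) h) :=
          L.comp_pairMor _ _ _
      _ = L.pairMor f g := by rw [k1, k2]
end

section
/- Let T be an algebraic theory and Q a T-presheaf. The T-presheaf A(Q), defined by A(Q)_n = Q_{n+1} with action q •_{A(Q)} f = q •_Q (ι_{n,1}(f_1),…,ι_{n,1}(f_m), x_{n+1}) (where ι_{n,1}(f_i) = f_i • (x_{n+1,1},…,x_{n+1,n})), is an exponential object Q^T of Q by the theory presheaf T in the category Pshf T: there is a bijection Pshf T(P × T, Q) ≅ Pshf T(P, A(Q)), natural in P. -/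
/-- An algebraic theory: a family of sets `T n` with variables
`x_{n,i} : T n` and substitution `• : T m × (T n)^m → T n` satisfying the
three algebraic theory axioms. -/
structure AlgTh where
  T : ℕ → Type
  xv : ∀ n, Fin n → T n
  subst : ∀ {m n}, T m → (Fin m → T n) → T n
  subst_xv : ∀ {m n} (j : Fin m) (g : Fin m → T n), subst (xv m j) g = g j
  subst_id : ∀ {m} (f : T m), subst f (xv m) = f
  subst_assoc : ∀ {l m n} (f : T l) (g : Fin l → T m) (h : Fin m → T n),
      subst (subst f g) h = subst f fun i => subst (g i) h

namespace AlgTh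

variable (S : AlgTh)

/-- Weakening `ι_{n,1} : T n → T (n+1)`. -/
def wk {n : ℕ} (f : S.T n) : S.T (n + 1) :=
  S.subst f fun j => S.xv (n + 1) j.castSucc

/-- Extension of a tuple: `(ι(h₁), …, ι(h_m), x_{n+1})`. -/
def ext {m n : ℕ} (h : Fin m → S.T n) : Fin (m + 1) → S.T (n + 1) :=
  Fin.snoc (fun i => S.wk (h i)) (S.xv (n + 1) (Fin.last n))

theorem ext_xv (m : ℕ) : S.ext (S.xv m) = S.xv (m + 1) := by
  funext j
  refine Fin.lastCases ?_ (fun i => ?_) j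
  · simp [ext]
  · simp [ext, wk, S.subst_xv]

theorem subst_ext {l m n : ℕ} (f : Fin l → S.T m) (g : Fin m → S.T n) :
    (fun i => S.subst (S.ext f i) (S.ext g)) = S.ext fun i => S.subst (f i) g := by
  funext i
  refine Fin.lastCases ?_ (fun i => ?_) i
  · simp [ext, S.subst_xv]
  · simp only [ext, Fin.snoc_castSucc, wk, S.subst_assoc, S.subst_xv]

end AlgTh

/-- A presheaf for an algebraic theory `S`: a family of sets `P n` with
actions `• : P m × (S n)^m → P n` satisfying the presheaf axioms. -/
structure Pshf (S : AlgTh) where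
  P : ℕ → Type
  act : ∀ {m n}, P m → (Fin m → S.T n) → P n
  act_id : ∀ {m} (p : P m), act p (S.xv m) = p
  act_assoc : ∀ {l m n} (p : P l) (f : Fin l → S.T m) (g : Fin m → S.T n),
      act (act p f) g = act p fun i => S.subst (f i) g

/-- A morphism of `S`-presheaves: a family of functions commuting with the
actions. -/
structure PshfHom {S : AlgTh} (P Q : Pshf S) where
  map : ∀ n, P.P n → Q.P n
  comm : ∀ {m n} (p : P.P m) (t : Fin m → S.T n), map n (P.act p t) = Q.act (map m p) t

namespace PshfHom

variable {S : AlgTh}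

theorem ext' {P Q : Pshf S} {f g : PshfHom P Q} (h : f.map = g.map) : f = g := by
  obtain ⟨fm, fc⟩ := f; obtain ⟨gm, gc⟩ := g; cases h; rfl

/-- The identity morphism of presheaves. -/
def idHom (P : Pshf S) : PshfHom P P := ⟨fun _ p => p, fun _ _ => rfl⟩

/-- Composition of presheaf morphisms. -/
def compHom {P Q R : Pshf S} (g : PshfHom Q R) (f : PshfHom P Q) : PshfHom P R where
  map n p := g.map n (f.map n p)
  comm p t := by (try dsimp only); rw [f.comm, g.comm]

end PshfHom

/-- The theory presheaf: `S` acting on itself by substitution. -/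
def theoryPshf (S : AlgTh) : Pshf S where
  P := S.T
  act := S.subst
  act_id := S.subst_id
  act_assoc := S.subst_assoc

/-- The binary product of presheaves, computed pointwise. -/
def prodPshf {S : AlgTh} (P Q : Pshf S) : Pshf S where
  P n := P.P n × Q.P n
  act p t := (P.act p.1 t, Q.act p.2 t)
  act_id p := by simp [P.act_id, Q.act_id]
  act_assoc p f g := by simp [P.act_assoc, Q.act_assoc]

/-- The `n`-fold power `Tⁿ` of the theory presheaf: `(Tⁿ)_m = (T m)ⁿ`,
with pointwise action. -/
def powPshf (S : AlgTh) (n : ℕ) : Pshf S where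
  P m := Fin n → S.T m
  act t s := fun i => S.subst (t i) s
  act_id t := by funext i; exact S.subst_id (t i)
  act_assoc t f g := by funext i; exact S.subst_assoc (t i) f g

/-- The product-of-morphisms `h × k` between product presheaves. -/
def prodMapHom {S : AlgTh} {P P' Q Q' : Pshf S} (h : PshfHom P P') (k : PshfHom Q Q') :
    PshfHom (prodPshf P Q) (prodPshf P' Q') where
  map n p := (h.map n p.1, k.map n p.2)
  comm p t := by simp [prodPshf, h.comm, k.comm]

/-- The presheaf `A(Q)`, with `A(Q)_n = Q_{n+1}` and action
`q •_{A(Q)} f = q •_Q (ι(f₁), …, ι(f_m), x_{n+1})`; it is the exponential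
`Q^T` of `Q` by the theory presheaf. -/
def APshf {S : AlgTh} (Q : Pshf S) : Pshf S where
  P n := Q.P (n + 1)
  act q f := Q.act q (S.ext f)
  act_id q := by (try dsimp only); rw [S.ext_xv]; exact Q.act_id q
  act_assoc q f g := by (try dsimp only); rw [Q.act_assoc, S.subst_ext]

/-! The curried form of `f : P × T → Q` sends `p ∈ P_n` to `f(ι p, x_{n+1}) ∈ Q_{n+1}`: the fresh
variable `x_{n+1}` stands for the `T`-component. Conversely `g : P → A(Q)` is uncurried by
substituting `t` for that variable, `(p, t) ↦ g(p) • (x_{n,1}, …, x_{n,n}, t)`. Both constructions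
commute with the actions and are mutually inverse by substitution identities relating weakening,
`AlgTh.ext` and `Fin.snoc`. -/

namespace AlgTh

variable (S : AlgTh)

def wkVars (n : ℕ) : Fin n → S.T (n + 1) :=
  Fin.init (S.xv (n + 1))

theorem subst_wkVars {n : ℕ} (f : S.T n) : S.subst f (S.wkVars n) = S.wk f := rfl

@[simp]
theorem ext_castSucc {m n : ℕ} (h : Fin m → S.T n) (i : Fin m) :
    S.ext h i.castSucc = S.wk (h i) :=
  Fin.snoc_castSucc (α := fun _ => S.T (n + 1)) ..

@[simp]
theorem ext_last {m n : ℕ} (h : Fin m → S.T n) :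
    S.ext h (Fin.last m) = S.xv (n + 1) (Fin.last n) :=
  Fin.snoc_last (α := fun _ => S.T (n + 1)) ..

theorem subst_wkVars_ext {m n : ℕ} (h : Fin m → S.T n) :
    (fun i => S.subst (S.wkVars m i) (S.ext h)) = fun i => S.wk (h i) := by
  funext i
  rw [wkVars, Fin.init, S.subst_xv, ext_castSucc]

theorem subst_wkVars_snoc {n : ℕ} (t : S.T n) :
    (fun i => S.subst (S.wkVars n i) (Fin.snoc (S.xv n) t)) = S.xv n := by
  funext i
  rw [wkVars, Fin.init, S.subst_xv, Fin.snoc_castSucc]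

theorem subst_ext_snoc {m n : ℕ} (h : Fin m → S.T n) (t : S.T n) :
    (fun i => S.subst (S.ext h i) (Fin.snoc (S.xv n) t)) = Fin.snoc h t := by
  funext i
  refine Fin.lastCases ?_ (fun i => ?_) i
  · rw [ext_last, S.subst_xv, Fin.snoc_last, Fin.snoc_last]
  · rw [ext_castSucc, Fin.snoc_castSucc, ← subst_wkVars, S.subst_assoc, subst_wkVars_snoc,
      S.subst_id]

theorem subst_snoc_xv {m n : ℕ} (t : S.T m) (h : Fin m → S.T n) :
    (fun i => S.subst (Fin.snoc (α := fun _ => S.T m) (S.xv m) t i) h) =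
      Fin.snoc h (S.subst t h) := by
  funext i
  refine Fin.lastCases ?_ (fun i => ?_) i
  · rw [Fin.snoc_last, Fin.snoc_last]
  · rw [Fin.snoc_castSucc, Fin.snoc_castSucc, S.subst_xv]

end AlgTh

section Exponential

variable {S : AlgTh} {P Q : Pshf S}

theorem Pshf.act_act_of_subst_eq (Q : Pshf S) {l m n : ℕ} (q : Q.P l) {f : Fin l → S.T m}
    {g : Fin m → S.T n} {h : Fin l → S.T n} (hfg : (fun i => S.subst (f i) g) = h) :
    Q.act (Q.act q f) g = Q.act q h := by
  rw [Q.act_assoc, hfg]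

theorem PshfHom.map_act_prod {R : Pshf S} (f : PshfHom (prodPshf P R) Q) {m n : ℕ} (p : P.P m)
    (r : R.P m) (t : Fin m → S.T n) :
    f.map n (P.act p t, R.act r t) = Q.act (f.map m (p, r)) t :=
  f.comm (p, r) t

theorem PshfHom.map_act_APshf (g : PshfHom P (APshf Q)) {m n : ℕ} (p : P.P m)
    (t : Fin m → S.T n) : g.map n (P.act p t) = Q.act (g.map m p) (S.ext t) :=
  g.comm p t

def curryHom (f : PshfHom (prodPshf P (theoryPshf S)) Q) : PshfHom P (APshf Q) where
  map n p := f.map (n + 1) (P.act p (S.wkVars n), S.xv (n + 1) (Fin.last n))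
  comm {m n} p t := by
    have hp : P.act (P.act p t) (S.wkVars n) = P.act (P.act p (S.wkVars m)) (S.ext t) := by
      rw [P.act_assoc, P.act_assoc, S.subst_wkVars_ext]
      rfl
    have hx : S.xv (n + 1) (Fin.last n) = S.subst (S.xv (m + 1) (Fin.last m)) (S.ext t) := by
      rw [S.subst_xv, AlgTh.ext_last]
    exact (congrArg (f.map (n + 1)) (Prod.ext hp hx)).trans (f.map_act_prod _ _ _)

def uncurryHom (g : PshfHom P (APshf Q)) : PshfHom (prodPshf P (theoryPshf S)) Q where
  map n p := Q.act (g.map n p.1) (Fin.snoc (S.xv n) p.2)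
  comm {m n} := fun (p, u) t =>
    calc Q.act (g.map n (P.act p t)) (Fin.snoc (S.xv n) (S.subst u t))
        = Q.act (Q.act (g.map m p) (S.ext t)) (Fin.snoc (S.xv n) (S.subst u t)) := by
          rw [g.map_act_APshf]
      _ = Q.act (g.map m p) (Fin.snoc t (S.subst u t)) :=
          Q.act_act_of_subst_eq _ (S.subst_ext_snoc t _)
      _ = Q.act (Q.act (g.map m p) (Fin.snoc (S.xv m) u)) t :=
          (Q.act_act_of_subst_eq _ (S.subst_snoc_xv u t)).symm

theorem uncurryHom_curryHom (f : PshfHom (prodPshf P (theoryPshf S)) Q) :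
    uncurryHom (curryHom f) = f := by
  refine PshfHom.ext' (funext₂ fun n (pu : P.P n × S.T n) => ?_)
  obtain ⟨p, u⟩ := pu
  have hp : P.act (P.act p (S.wkVars n)) (Fin.snoc (S.xv n) u) = p := by
    rw [P.act_assoc, S.subst_wkVars_snoc, P.act_id]
  have hu : S.subst (S.xv (n + 1) (Fin.last n)) (Fin.snoc (S.xv n) u) = u := by
    rw [S.subst_xv, Fin.snoc_last]
  exact (f.map_act_prod _ _ _).symm.trans (congrArg (f.map n) (Prod.ext hp hu))

theorem curryHom_uncurryHom (g : PshfHom P (APshf Q)) : curryHom (uncurryHom g) = g := by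
  refine PshfHom.ext' (funext₂ fun n p => ?_)
  dsimp only [curryHom, uncurryHom]
  rw [g.map_act_APshf]
  exact (Q.act_act_of_subst_eq _ ((S.subst_ext_snoc _ _).trans (Fin.snoc_init_self _))).trans
    (Q.act_id _)

def curryEquiv (P Q : Pshf S) : PshfHom (prodPshf P (theoryPshf S)) Q ≃ PshfHom P (APshf Q) where
  toFun := curryHom
  invFun := uncurryHom
  left_inv := uncurryHom_curryHom
  right_inv := curryHom_uncurryHom

theorem curryHom_comp_prodMapHom {P' : Pshf S} (h : PshfHom P' P)
    (f : PshfHom (prodPshf P (theoryPshf S)) Q) :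
    curryHom (f.compHom (prodMapHom h (PshfHom.idHom (theoryPshf S)))) =
      (curryHom f).compHom h := by
  refine PshfHom.ext' (funext₂ fun n p => ?_)
  change f.map (n + 1) (h.map (n + 1) (P'.act p (S.wkVars n)), _) = _
  rw [h.comm]
  rfl

end Exponential

/-- Let `T` be an algebraic theory and `Q` a `T`-presheaf.
The `T`-presheaf `A(Q)`, defined by `A(Q)ₙ = Q_{n+1}` with action
`q •_{A(Q)} f = q •_Q (ι_{n,1}(f₁), …, ι_{n,1}(f_m), x_{n+1})`, is an
exponential object `Q^T` of `Q` by the theory presheaf `T` in the category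
`Pshf T`: there is a bijection `Pshf T(P × T, Q) ≅ Pshf T(P, A(Q))`, natural
in `P`. -/
theorem APshf_is_exponential (S : AlgTh) (Q : Pshf S) :
    ∃ e : ∀ P : Pshf S, PshfHom (prodPshf P (theoryPshf S)) Q ≃ PshfHom P (APshf Q),
      -- naturality in `P`: for every presheaf morphism `h : P' → P` and
      -- `f : P × T → Q`, we have `e(f ∘ (h × id_T)) = e(f) ∘ h`
      ∀ (P P' : Pshf S) (h : PshfHom P' P)
        (f : PshfHom (prodPshf P (theoryPshf S)) Q),
        e P' (f.compHom (prodMapHom h (PshfHom.idHom (theoryPshf S)))) =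
          (e P f).compHom h :=
  ⟨fun P => curryEquiv P Q, fun _ _ => curryHom_comp_prodMapHom⟩
end

section
/- Let L be a λ-theory satisfying β-equality. Let M₀ be the monoid whose underlying set is {f ∈ L₀ | λ(ρ(f)) = f}, with multiplication a ∘ b = λx₁. a (b x₁) and unit λ(x_{1,1}), and let M₁ be the monoid whose underlying set is L₁, with multiplication f * g = f • (g) and unit x_{1,1}. Then ρ₀ and λ₀ restrict to mutually inverse monoid isomorphisms M₀ ≅ M₁. -/
namespace LamTh

variable (L : LamTh)

lemma xv_one_eq (i : Fin 1) : (fun _ : Fin 1 => L.xv 1 i) = L.xv 1 := by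
  funext j; congr 1; exact Subsingleton.elim _ _

lemma rho_eq0 (f : L.T 0) : L.rho f = L.appT (L.wk f) (L.xv 1 0) := by
  conv_lhs => rw [← L.subst_xv (0 : Fin 1) (fun _ => f), L.rho_subst]
  unfold appT
  congr 1
  funext i
  induction i using Fin.lastCases with
  | last => rw [Fin.snoc_last]; rfl
  | cast j => rw [Fin.snoc_castSucc]; fin_cases j; rfl

lemma subst_rho0 (f : L.T 0) (t : L.T 1) :
    L.appT (L.wk f) t = L.subst (L.rho f) fun _ => t := by
  rw [L.rho_eq0]
  unfold appT
  rw [L.subst_assoc]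
  congr 1
  funext i
  fin_cases i
  · show L.wk f = L.subst (L.wk f) fun _ => t
    unfold wk
    rw [L.subst_assoc]
    congr 1
    funext j
    exact j.elim0
  · show t = L.subst (L.xv 1 0) fun _ => t
    rw [L.subst_xv]

lemma rho_comp (a b : L.T 0) :
    L.rho (L.comp a b) = L.subst (L.rho a) fun _ => L.rho b := by
  unfold comp compT
  rw [L.beta, L.subst_rho0, L.subst_rho0]
  congr 1
  funext i
  rw [L.xv_one_eq, L.subst_id]

lemma mem_comp (a b : L.T 0) : L.abs (L.rho (L.comp a b)) = L.comp a b := by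
  unfold comp compT
  rw [L.beta]

lemma rho_inj {a b : L.T 0} (ha : L.abs (L.rho a) = a) (hb : L.abs (L.rho b) = b)
    (h : L.rho a = L.rho b) : a = b := by
  rw [← ha, ← hb, h]

def M1 : Monoid (L.T 1) where
  mul f g := L.subst f fun _ => g
  mul_assoc f g h := L.subst_assoc f _ _
  one := L.xv 1 0
  one_mul f := L.subst_xv 0 _
  mul_one f := by
    show L.subst f (fun _ => L.xv 1 0) = f
    rw [L.xv_one_eq, L.subst_id]

def M0 : Monoid {f : L.T 0 // L.abs (L.rho f) = f} where
  mul a b := ⟨L.comp a.1 b.1, L.mem_comp a.1 b.1⟩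
  one := ⟨L.abs (L.xv 1 0), by rw [L.beta]⟩
  mul_assoc a b c := by
    apply Subtype.ext
    apply L.rho_inj (L.mem_comp _ _) (L.mem_comp _ _)
    show L.rho (L.comp (L.comp a.1 b.1) c.1) = L.rho (L.comp a.1 (L.comp b.1 c.1))
    rw [L.rho_comp, L.rho_comp, L.rho_comp, L.rho_comp, L.subst_assoc]
  one_mul a := by
    apply Subtype.ext
    apply L.rho_inj (L.mem_comp _ _) a.2
    show L.rho (L.comp (L.abs (L.xv 1 0)) a.1) = L.rho a.1
    rw [L.rho_comp, L.beta, L.subst_xv]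
  mul_one a := by
    apply Subtype.ext
    apply L.rho_inj (L.mem_comp _ _) a.2
    show L.rho (L.comp a.1 (L.abs (L.xv 1 0))) = L.rho a.1
    rw [L.rho_comp, L.beta, L.xv_one_eq, L.subst_id]

end LamTh

/-- Let `L` be a λ-theory satisfying β-equality.  Let `M₀` be
the monoid on `{f ∈ L₀ | λ(ρ(f)) = f}` with multiplication `a ∘ b = λx₁. a (b x₁)`
and unit `λ(x_{1,1})`, and let `M₁` be the monoid on `L₁` with multiplication
`f * g = f • (g)` and unit `x_{1,1}`.  Then `ρ₀` and `λ₀` restrict to mutually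
inverse monoid isomorphisms `M₀ ≅ M₁`. -/
theorem eta_monoid_iso (L : LamTh) :
    ∃ m0 : Monoid {f : L.T 0 // L.abs (L.rho f) = f},
      (∀ a b : {f : L.T 0 // L.abs (L.rho f) = f},
        (@HMul.hMul _ _ _ (@instHMul _ m0.toSemigroup.toMul) a b).1 = L.comp a.1 b.1) ∧
      (@One.one _ (@Monoid.toMulOneClass _ m0).toOne).1 = L.abs (L.xv 1 0) ∧
      ∃ m1 : Monoid (L.T 1),
        (∀ f g : L.T 1,
          @HMul.hMul _ _ _ (@instHMul _ m1.toSemigroup.toMul) f g = L.subst f fun _ => g) ∧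
        @One.one _ (@Monoid.toMulOneClass _ m1).toOne = L.xv 1 0 ∧
        ∃ e : @MulEquiv {f : L.T 0 // L.abs (L.rho f) = f} (L.T 1)
            m0.toSemigroup.toMul m1.toSemigroup.toMul,
          (∀ f, e f = L.rho f.1) ∧ ∀ g, (e.symm g).1 = L.abs g := by
  letI := L.M0
  letI := L.M1
  refine ⟨L.M0, fun a b => rfl, rfl, L.M1, fun f g => rfl, rfl,
    ⟨{ toFun := fun a => L.rho a.1
       invFun := fun g => ⟨L.abs g, by rw [L.beta]⟩
       left_inv := fun a => Subtype.ext a.2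
       right_inv := fun g => L.beta g
       map_mul' := fun a b => L.rho_comp a.1 b.1 },
     fun f => rfl, fun g => rfl⟩⟩
end
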